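/- The element y_0 x_0 y_0^{−1} (product taken in Homeo(C_n) with the convention fg = g∘f) belongs to G_0(n), while the element y_0^{−1} x_{0[0]} y_0 does not belong to Gy(n). -/

import Mathlib

namespace LM

/-- Group structure on the self-homeomorphisms of a space, with the convention
`(f * g) ξ = f (g ξ)`.  A product `f₁ f₂ ⋯ f_k` in the paper's convention
(`fg = g ∘ f`) corresponds to `f_k * ⋯ * f₂ * f₁` here. -/
instance homeoGroup {X : Type*} [TopologicalSpace X] : Group (X ≃ₜ X) where
  mul f g := g.trans f
  one := Homeomorph.refl X
  inv := Homeomorph.symm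
  mul_assoc _ _ _ := Homeomorph.ext fun _ => rfl
  one_mul _ := Homeomorph.ext fun _ => rfl
  mul_one _ := Homeomorph.ext fun _ => rfl
  inv_mul_cancel f := Homeomorph.ext fun x => f.symm_apply_apply x

/-- The `n`-adic Cantor set `{0, …, n-1}^ℕ` with the product topology
(`Fin n` being discrete). -/
abbrev C (n : ℕ) : Type := ℕ → Fin n

/-- The group of self-homeomorphisms of the `n`-adic Cantor set. -/
abbrev Γ (n : ℕ) : Type := C n ≃ₜ C n

/-- Prepend a letter to an infinite sequence. -/
def cons {n : ℕ} (a : Fin n) (s : C n) : C n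
  | 0 => a
  | i + 1 => s i

/-- Prepend a finite word to an infinite sequence. -/
def wcons {n : ℕ} (w : List (Fin n)) (s : C n) : C n := w.foldr cons s

/-- The sum of the letters of a finite word. -/
def dsum {n : ℕ} (w : List (Fin n)) : ℕ := (w.map Fin.val).sum

/-- `f` acts as `core` after the prefix `α` and fixes every sequence not beginning
with `α`. -/
def IsPrefixMap {n : ℕ} (α : List (Fin n)) (core : Γ n) (f : Γ n) : Prop :=
  (∀ η, f (wcons α η) = wcons α (core η)) ∧
  (∀ ξ : C n, (∀ η, ξ ≠ wcons α η) → f ξ = ξ)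

/-- The defining equations of the generator `x₀` of the Brown–Thompson group `F(n)`. -/
def IsX0 (n : ℕ) (hn : 2 ≤ n) (f : Γ n) : Prop :=
  (∀ k : Fin n, (k : ℕ) ≤ n - 2 → ∀ η,
    f (cons ⟨0, by omega⟩ (cons k η)) = cons k η) ∧
  (∀ η, f (cons ⟨0, by omega⟩ (cons ⟨n - 1, by omega⟩ η)) =
    cons ⟨n - 1, by omega⟩ (cons ⟨0, by omega⟩ η)) ∧
  (∀ k : Fin n, 1 ≤ (k : ℕ) → (k : ℕ) ≤ n - 2 → ∀ η,
    f (cons k η) = cons ⟨n - 1, by omega⟩ (cons k η)) ∧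
  (∀ η, f (cons ⟨n - 1, by omega⟩ η) =
    cons ⟨n - 1, by omega⟩ (cons ⟨n - 1, by omega⟩ η))

/-- The defining equations of the generator `x_j`, `1 ≤ j ≤ n - 2`. -/
def IsXMid (n : ℕ) (hn : 2 ≤ n) (j : Fin n) (f : Γ n) : Prop :=
  (∀ k : Fin n, (k : ℕ) < (j : ℕ) → ∀ η, f (cons k η) = cons k η) ∧
  (∀ k m : Fin n, (m : ℕ) = (j : ℕ) + (k : ℕ) → (j : ℕ) + (k : ℕ) ≤ n - 2 → ∀ η,
    f (cons j (cons k η)) = cons m η) ∧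
  (∀ k m : Fin n, n - 1 ≤ (j : ℕ) + (k : ℕ) → (m : ℕ) = (j : ℕ) + (k : ℕ) - (n - 1) → ∀ η,
    f (cons j (cons k η)) = cons ⟨n - 1, by omega⟩ (cons m η)) ∧
  (∀ k : Fin n, (j : ℕ) < (k : ℕ) → (k : ℕ) ≤ n - 2 → ∀ η,
    f (cons k η) = cons ⟨n - 1, by omega⟩ (cons k η)) ∧
  (∀ η, f (cons ⟨n - 1, by omega⟩ η) =
    cons ⟨n - 1, by omega⟩ (cons ⟨n - 1, by omega⟩ η))

/-- The defining equations of the generator `x_{n-1}` (in terms of `x₀`). -/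
def IsXLast (n : ℕ) (hn : 2 ≤ n) (x0 f : Γ n) : Prop :=
  (∀ k : Fin n, (k : ℕ) ≤ n - 2 → ∀ η, f (cons k η) = cons k η) ∧
  (∀ η, f (cons ⟨n - 1, by omega⟩ η) = cons ⟨n - 1, by omega⟩ (x0 η))

/-- `x` is the family `x₀, …, x_{n-1}` of generators of the Brown–Thompson group. -/
def IsXFamily (n : ℕ) (hn : 2 ≤ n) (x : Fin n → Γ n) : Prop :=
  IsX0 n hn (x ⟨0, by omega⟩) ∧
  (∀ j : Fin n, 1 ≤ (j : ℕ) → (j : ℕ) ≤ n - 2 → IsXMid n hn j (x j)) ∧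
  IsXLast n hn (x ⟨0, by omega⟩) (x ⟨n - 1, by omega⟩)

/-- The defining (co)recursive equations of the map `y`. -/
def IsY (n : ℕ) (hn : 2 ≤ n) (f : Γ n) : Prop :=
  (∀ ζ, f (cons ⟨0, by omega⟩ (cons ⟨0, by omega⟩ ζ)) = cons ⟨0, by omega⟩ (f ζ)) ∧
  (∀ k : Fin n, 1 ≤ (k : ℕ) → (k : ℕ) ≤ n - 2 → ∀ ζ,
    f (cons ⟨0, by omega⟩ (cons k ζ)) = cons k ζ) ∧
  (∀ k : Fin n, 1 ≤ (k : ℕ) → (k : ℕ) ≤ n - 2 → ∀ ζ,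
    f (cons k ζ) = cons ⟨n - 1, by omega⟩ (cons k ζ)) ∧
  (∀ ζ, f (cons ⟨0, by omega⟩ (cons ⟨n - 1, by omega⟩ ζ)) =
    cons ⟨n - 1, by omega⟩ (cons ⟨0, by omega⟩ (f⁻¹ ζ))) ∧
  (∀ ζ, f (cons ⟨n - 1, by omega⟩ ζ) =
    cons ⟨n - 1, by omega⟩ (cons ⟨n - 1, by omega⟩ (f ζ)))


/-!
Write `𝟘` for the letter `0` and `𝕃` for the letter `n - 1`. In the paper's notation the
first claim rests on the identity `y₀x₀y₀⁻¹ = x_{0[0]} y_{0𝕃0}⁻¹ y_{0𝕃𝕃} x₀`, checked on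
cylinders. Every factor lies in `G₀(n)`: `x_{0[0]}` is the word `x₀x₀x₀⁻¹x_{𝕃}⁻¹` of `F(n)`,
and `y_{0𝕃0}`, `y_{0𝕃𝕃}` are conjugates of `y_{𝕃0}` by elements of `F(n)` carrying the
cylinders `0𝕃0`, `0𝕃𝕃` onto `𝕃0`.

For the second claim, every generator of `Gy(n)` maps `0ᵃζ ↦ 0ᵇζ` for some fixed `a, b`, and
these maps form a subgroup. Since `y(00ζ) = 0y(ζ)`, the element `y₀⁻¹x_{0[0]}y₀` sends
`0ᵃ⁺²ζ` to `0ᵃ⁺¹y(0y⁻¹ζ)`; for `ζ = y(𝕃ω)` this is `0ᵃ⁺¹𝕃0y⁻¹ω`, which is never of the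
form `0ᵇ⁺²ζ = 0ᵇ⁺²𝕃𝕃yω`.
-/

section Sequences

variable {n : ℕ}

@[simp]
lemma mul_apply (f g : Γ n) (ξ : C n) : (f * g) ξ = f (g ξ) := rfl

@[simp]
lemma apply_inv_apply (f : Γ n) (ξ : C n) : f (f⁻¹ ξ) = ξ := f.apply_symm_apply ξ

@[simp]
lemma inv_apply_apply (f : Γ n) (ξ : C n) : f⁻¹ (f ξ) = ξ := f.symm_apply_apply ξ

lemma inv_apply_eq_iff {f : Γ n} {ξ η : C n} : f⁻¹ ξ = η ↔ ξ = f η :=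
  f.toEquiv.symm_apply_eq

lemma exists_eq_cons (ξ : C n) : ∃ a σ, ξ = cons a σ :=
  ⟨ξ 0, fun i => ξ (i + 1), funext fun i => by cases i <;> rfl⟩

lemma wcons_append (u v : List (Fin n)) (s : C n) : wcons (u ++ v) s = wcons u (wcons v s) :=
  List.foldr_append ..

lemma wcons_replicate_add (z : Fin n) (a b : ℕ) (s : C n) :
    wcons (List.replicate (a + b) z) s =
      wcons (List.replicate a z) (wcons (List.replicate b z) s) := by
  rw [List.replicate_add, wcons_append]

lemma cons_wcons_replicate (z : Fin n) (a : ℕ) (s : C n) :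
    cons z (wcons (List.replicate a z) s) = wcons (List.replicate a z) (cons z s) :=
  wcons_replicate_add z a 1 s

lemma wcons_replicate_cons_cons_ne {z w : Fin n} (h : z ≠ w) (a b : ℕ) (σ τ : C n) :
    wcons (List.replicate a z) (cons w (cons z σ)) ≠
      wcons (List.replicate b z) (cons w (cons w τ)) := by
  induction a generalizing b with
  | zero =>
    cases b with
    | zero => exact fun e => h (congrFun e 1)
    | succ b => exact fun e => h.symm (congrFun e 0)
  | succ a ih =>
    cases b with
    | zero => exact fun e => h (congrFun e 0)
    | succ b => exact fun e => ih b (funext fun i => congrFun e (i + 1))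

end Sequences

namespace IsPrefixMap

variable {n : ℕ} {α β : List (Fin n)} {a b d : Fin n} {core f g c : Γ n}

lemma inv (h : IsPrefixMap α core f) : IsPrefixMap α core⁻¹ f⁻¹ :=
  ⟨fun η => by rw [inv_apply_eq_iff, h.1, apply_inv_apply],
    fun ξ hξ => by rw [inv_apply_eq_iff, h.2 ξ hξ]⟩

lemma conj (hg : IsPrefixMap β core g) (hc : ∀ η, c (wcons α η) = wcons β η) :
    IsPrefixMap α core (c⁻¹ * g * c) := by
  refine ⟨fun η => ?_, fun ξ hξ => ?_⟩
  · rw [mul_apply, mul_apply, hc, hg.1, inv_apply_eq_iff, hc]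
  · have hcξ : ∀ η, c ξ ≠ wcons β η := fun η e => hξ η (c.injective (by rw [hc]; exact e))
    rw [mul_apply, mul_apply, hg.2 _ hcξ, inv_apply_apply]

lemma apply_cons (h : IsPrefixMap [a] core f) (η : C n) : f (cons a η) = cons a (core η) :=
  h.1 η

lemma apply_cons_cons_cons (h : IsPrefixMap [a, b, d] core f) (η : C n) :
    f (cons a (cons b (cons d η))) = cons a (cons b (cons d (core η))) :=
  h.1 η

lemma apply_cons_of_ne (h : IsPrefixMap (a :: α) core f) {a' : Fin n} (ha : a' ≠ a)
    (σ : C n) : f (cons a' σ) = cons a' σ :=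
  h.2 _ fun _ e => ha (congrFun e 0)

lemma apply_cons_cons_of_ne (h : IsPrefixMap (a :: b :: α) core f) {b' : Fin n} (hb : b' ≠ b)
    (σ : C n) : f (cons a (cons b' σ)) = cons a (cons b' σ) :=
  h.2 _ fun _ e => hb (congrFun e 1)

lemma apply_cons_cons_cons_of_ne (h : IsPrefixMap (a :: b :: d :: α) core f) {d' : Fin n}
    (hd : d' ≠ d) (σ : C n) : f (cons a (cons b (cons d' σ))) = cons a (cons b (cons d' σ)) :=
  h.2 _ fun _ e => hd (congrFun e 2)

end IsPrefixMap

def replicateShifts {n : ℕ} (z : Fin n) : Subgroup (Γ n) where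
  carrier := {g | ∃ a b, ∀ ζ, g (wcons (List.replicate a z) ζ) = wcons (List.replicate b z) ζ}
  one_mem' := ⟨0, 0, fun _ => rfl⟩
  mul_mem' := by
    rintro g h ⟨p, q, hpq⟩ ⟨r, s, hrs⟩
    refine ⟨r + p, q + s, fun ζ => ?_⟩
    rw [mul_apply, wcons_replicate_add, hrs, ← wcons_replicate_add, Nat.add_comm s p,
      wcons_replicate_add, hpq, ← wcons_replicate_add]
  inv_mem' := by
    rintro g ⟨p, q, hpq⟩
    exact ⟨q, p, fun ζ => inv_apply_eq_iff.mpr (hpq ζ).symm⟩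

lemma mem_replicateShifts_of_apply_cons {n : ℕ} {z : Fin n} {g : Γ n}
    (h : ∀ ζ, g (cons z ζ) = cons z ζ) : g ∈ replicateShifts z :=
  ⟨1, 1, h⟩

abbrev zeroDigit {n : ℕ} (hn : 2 ≤ n) : Fin n := ⟨0, by omega⟩

abbrev lastDigit {n : ℕ} (hn : 2 ≤ n) : Fin n := ⟨n - 1, by omega⟩

section Digits

variable {n : ℕ} (hn : 2 ≤ n)

local notation "𝟘" => zeroDigit hn
local notation "𝕃" => lastDigit hn

lemma zeroDigit_ne_lastDigit : 𝟘 ≠ 𝕃 :=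
  Fin.ne_of_val_ne (by simp only [ne_eq]; omega)

lemma digit_cases (k : Fin n) : k = 𝟘 ∨ k = 𝕃 ∨ (1 ≤ (k : ℕ) ∧ (k : ℕ) ≤ n - 2) := by
  rcases k with ⟨k, hk⟩
  simp only [Fin.mk.injEq]
  omega

lemma eq_lastDigit_or_le (k : Fin n) : k = 𝕃 ∨ (k : ℕ) ≤ n - 2 := by
  rcases k with ⟨k, hk⟩
  simp only [Fin.mk.injEq]
  omega

variable {hn}

lemma ne_zeroDigit_of_one_le {k : Fin n} (hk : 1 ≤ (k : ℕ)) : k ≠ 𝟘 :=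
  Fin.ne_of_val_ne (by simp only [ne_eq]; omega)

lemma ne_lastDigit_of_le {k : Fin n} (hk : (k : ℕ) ≤ n - 2) : k ≠ 𝕃 :=
  Fin.ne_of_val_ne (by simp only [ne_eq]; omega)

end Digits

section LodhaMoore

variable {n : ℕ} {hn : 2 ≤ n} {x : Fin n → Γ n} {ycore : Γ n}

local notation "𝟘" => zeroDigit hn
local notation "𝕃" => lastDigit hn

namespace IsXFamily

lemma x0_apply_zero_le (hx : IsXFamily n hn x) {k : Fin n} (hk : (k : ℕ) ≤ n - 2) (η : C n) :
    x 𝟘 (cons 𝟘 (cons k η)) = cons k η :=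
  hx.1.1 k hk η

lemma x0_apply_zero_last (hx : IsXFamily n hn x) (η : C n) :
    x 𝟘 (cons 𝟘 (cons 𝕃 η)) = cons 𝕃 (cons 𝟘 η) :=
  hx.1.2.1 η

lemma x0_apply_mid (hx : IsXFamily n hn x) {k : Fin n} (hk₁ : 1 ≤ (k : ℕ))
    (hk₂ : (k : ℕ) ≤ n - 2) (η : C n) : x 𝟘 (cons k η) = cons 𝕃 (cons k η) :=
  hx.1.2.2.1 k hk₁ hk₂ η

lemma x0_apply_last (hx : IsXFamily n hn x) (η : C n) :
    x 𝟘 (cons 𝕃 η) = cons 𝕃 (cons 𝕃 η) :=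
  hx.1.2.2.2 η

lemma xLast_apply_le (hx : IsXFamily n hn x) {k : Fin n} (hk : (k : ℕ) ≤ n - 2) (η : C n) :
    x 𝕃 (cons k η) = cons k η :=
  hx.2.2.1 k hk η

lemma xLast_apply_last (hx : IsXFamily n hn x) (η : C n) :
    x 𝕃 (cons 𝕃 η) = cons 𝕃 (x 𝟘 η) :=
  hx.2.2.2 η

lemma exists_x0_apply_eq_cons_last (hx : IsXFamily n hn x) {k : Fin n} (hk : k ≠ 𝟘)
    (σ : C n) : ∃ τ, x 𝟘 (cons k σ) = cons 𝕃 τ := by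
  rcases digit_cases hn k with rfl | rfl | ⟨hk₁, hk₂⟩
  · exact absurd rfl hk
  · exact ⟨_, hx.x0_apply_last σ⟩
  · exact ⟨_, hx.x0_apply_mid hk₁ hk₂ σ⟩

lemma apply_cons_zero (hx : IsXFamily n hn x) {j : Fin n} (hj : j ≠ 𝟘) (η : C n) :
    x j (cons 𝟘 η) = cons 𝟘 η := by
  rcases digit_cases hn j with rfl | rfl | ⟨hj₁, hj₂⟩
  · exact absurd rfl hj
  · exact hx.xLast_apply_le (Nat.zero_le _) η
  · exact (hx.2.1 j hj₁ hj₂).1 𝟘 (by simp only; omega) η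

lemma mem_replicateShifts (hx : IsXFamily n hn x) (j : Fin n) : x j ∈ replicateShifts 𝟘 := by
  by_cases hj : j = 𝟘
  · subst hj
    exact ⟨2, 1, hx.x0_apply_zero_le (k := 𝟘) (Nat.zero_le _)⟩
  · exact mem_replicateShifts_of_apply_cons (hx.apply_cons_zero hj)

lemma x0_mul_x0 (hx : IsXFamily n hn x) {X00 : Γ n} (hX00 : IsPrefixMap [𝟘] (x 𝟘) X00) :
    x 𝟘 * x 𝟘 = x 𝕃 * x 𝟘 * X00 := by
  have hl0 := (zeroDigit_ne_lastDigit hn).symm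
  ext ξ : 1
  simp only [mul_apply]
  obtain ⟨a, σ, rfl⟩ := exists_eq_cons ξ
  rcases digit_cases hn a with rfl | rfl | ⟨ha₁, ha₂⟩
  · obtain ⟨b, τ, rfl⟩ := exists_eq_cons σ
    rcases digit_cases hn b with rfl | rfl | ⟨hb₁, hb₂⟩
    · obtain ⟨c, ζ, rfl⟩ := exists_eq_cons τ
      rcases eq_lastDigit_or_le hn c with rfl | hc
      · rw [hx.x0_apply_zero_le (k := 𝟘) (Nat.zero_le _), hx.x0_apply_zero_last,
          hX00.apply_cons, hx.x0_apply_zero_last, hx.x0_apply_zero_last,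
          hx.xLast_apply_last, hx.x0_apply_zero_le (k := 𝟘) (Nat.zero_le _)]
      · rw [hx.x0_apply_zero_le (k := 𝟘) (Nat.zero_le _), hx.x0_apply_zero_le hc,
          hX00.apply_cons, hx.x0_apply_zero_le hc, hx.x0_apply_zero_le hc,
          hx.xLast_apply_le hc]
    · rw [hx.x0_apply_zero_last, hx.x0_apply_last, hX00.apply_cons, hx.x0_apply_last,
        hx.x0_apply_zero_last, hx.xLast_apply_last, hx.x0_apply_zero_last]
    · rw [hx.x0_apply_zero_le hb₂, hx.x0_apply_mid hb₁ hb₂, hX00.apply_cons,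
        hx.x0_apply_mid hb₁ hb₂, hx.x0_apply_zero_last, hx.xLast_apply_last,
        hx.x0_apply_zero_le hb₂]
  · rw [hx.x0_apply_last, hx.x0_apply_last, hX00.apply_cons_of_ne hl0, hx.x0_apply_last,
      hx.xLast_apply_last, hx.x0_apply_last]
  · rw [hx.x0_apply_mid ha₁ ha₂, hx.x0_apply_last,
      hX00.apply_cons_of_ne (ne_zeroDigit_of_one_le ha₁),
      hx.x0_apply_mid ha₁ ha₂, hx.xLast_apply_last, hx.x0_apply_mid ha₁ ha₂]

lemma xLast_mul_x0_apply_wcons (hx : IsXFamily n hn x) (η : C n) :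
    (x 𝕃 * x 𝟘) (wcons [𝟘, 𝕃, 𝟘] η) = wcons [𝕃, 𝟘] η := by
  change x 𝕃 (x 𝟘 (cons 𝟘 (cons 𝕃 (cons 𝟘 η)))) = cons 𝕃 (cons 𝟘 η)
  rw [hx.x0_apply_zero_last, hx.xLast_apply_last, hx.x0_apply_zero_le (k := 𝟘) (Nat.zero_le _)]

lemma x0_conj_xLast_apply_wcons (hx : IsXFamily n hn x) (η : C n) :
    ((x 𝟘)⁻¹ * x 𝕃 * x 𝟘) (wcons [𝟘, 𝕃, 𝕃] η) = wcons [𝕃, 𝟘] η := by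
  change (x 𝟘)⁻¹ (x 𝕃 (x 𝟘 (cons 𝟘 (cons 𝕃 (cons 𝕃 η))))) = cons 𝕃 (cons 𝟘 η)
  rw [hx.x0_apply_zero_last, hx.xLast_apply_last, hx.x0_apply_zero_last, inv_apply_eq_iff,
    hx.x0_apply_last]

end IsXFamily

namespace IsY

lemma apply_zero_zero (hy : IsY n hn ycore) (ζ : C n) :
    ycore (cons 𝟘 (cons 𝟘 ζ)) = cons 𝟘 (ycore ζ) :=
  hy.1 ζ

lemma apply_zero_mid (hy : IsY n hn ycore) {k : Fin n} (hk₁ : 1 ≤ (k : ℕ))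
    (hk₂ : (k : ℕ) ≤ n - 2) (ζ : C n) : ycore (cons 𝟘 (cons k ζ)) = cons k ζ :=
  hy.2.1 k hk₁ hk₂ ζ

lemma apply_mid (hy : IsY n hn ycore) {k : Fin n} (hk₁ : 1 ≤ (k : ℕ))
    (hk₂ : (k : ℕ) ≤ n - 2) (ζ : C n) : ycore (cons k ζ) = cons 𝕃 (cons k ζ) :=
  hy.2.2.1 k hk₁ hk₂ ζ

lemma apply_zero_last (hy : IsY n hn ycore) (ζ : C n) :
    ycore (cons 𝟘 (cons 𝕃 ζ)) = cons 𝕃 (cons 𝟘 (ycore⁻¹ ζ)) :=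
  hy.2.2.2.1 ζ

lemma apply_last (hy : IsY n hn ycore) (ζ : C n) :
    ycore (cons 𝕃 ζ) = cons 𝕃 (cons 𝕃 (ycore ζ)) :=
  hy.2.2.2.2 ζ

lemma apply_replicate_two_mul (hy : IsY n hn ycore) (a : ℕ) (ζ : C n) :
    ycore (wcons (List.replicate (2 * a) 𝟘) ζ) = wcons (List.replicate a 𝟘) (ycore ζ) := by
  induction a with
  | zero => rfl
  | succ a ih => exact (hy.apply_zero_zero _).trans (congrArg (cons 𝟘) ih)

lemma inv_apply_replicate (hy : IsY n hn ycore) (a : ℕ) (ζ : C n) :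
    ycore⁻¹ (wcons (List.replicate a 𝟘) ζ) = wcons (List.replicate (2 * a) 𝟘) (ycore⁻¹ ζ) := by
  rw [inv_apply_eq_iff, hy.apply_replicate_two_mul, apply_inv_apply]

end IsY

variable {y0 X00 : Γ n}

theorem y0_conj_x0 (hx : IsXFamily n hn x) (hy : IsY n hn ycore)
    (hy0 : IsPrefixMap [𝟘] ycore y0) (hX00 : IsPrefixMap [𝟘] (x 𝟘) X00) {E₁ E₂ : Γ n}
    (hE₁ : IsPrefixMap [𝟘, 𝕃, 𝟘] ycore E₁) (hE₂ : IsPrefixMap [𝟘, 𝕃, 𝕃] ycore E₂) :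
    y0⁻¹ * x 𝟘 * y0 = x 𝟘 * E₂ * E₁⁻¹ * X00 := by
  have h0l := zeroDigit_ne_lastDigit hn
  ext ξ : 1
  simp only [mul_apply]
  obtain ⟨a, σ, rfl⟩ := exists_eq_cons ξ
  rcases (eq_or_ne a 𝟘).symm with ha | rfl
  · obtain ⟨τ, hτ⟩ := hx.exists_x0_apply_eq_cons_last ha σ
    rw [hy0.apply_cons_of_ne ha, hτ, hy0.inv.apply_cons_of_ne h0l.symm,
      hX00.apply_cons_of_ne ha, hE₁.inv.apply_cons_of_ne ha, hE₂.apply_cons_of_ne ha, hτ]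
  rw [hy0.apply_cons, hX00.apply_cons]
  obtain ⟨b, τ, rfl⟩ := exists_eq_cons σ
  rcases digit_cases hn b with rfl | rfl | ⟨hb₁, hb₂⟩
  · obtain ⟨c, ζ, rfl⟩ := exists_eq_cons τ
    rcases digit_cases hn c with rfl | rfl | ⟨hc₁, hc₂⟩
    · rw [hy.apply_zero_zero, hx.x0_apply_zero_le (k := 𝟘) (Nat.zero_le _), hy0.inv.apply_cons,
        inv_apply_apply, hx.x0_apply_zero_le (k := 𝟘) (Nat.zero_le _),
        hE₁.inv.apply_cons_cons_of_ne h0l, hE₂.apply_cons_cons_of_ne h0l,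
        hx.x0_apply_zero_le (k := 𝟘) (Nat.zero_le _)]
    · rw [hy.apply_zero_last, hx.x0_apply_zero_last, hy0.inv.apply_cons_of_ne h0l.symm,
        hx.x0_apply_zero_last, hE₁.inv.apply_cons_cons_cons, hE₂.apply_cons_cons_cons_of_ne h0l,
        hx.x0_apply_zero_last]
    · rw [hy.apply_zero_mid hc₁ hc₂, hx.x0_apply_zero_le hc₂,
        hy0.inv.apply_cons_of_ne (ne_zeroDigit_of_one_le hc₁),
        hE₁.inv.apply_cons_cons_of_ne (ne_lastDigit_of_le hc₂),
        hE₂.apply_cons_cons_of_ne (ne_lastDigit_of_le hc₂), hx.x0_apply_zero_le hc₂]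
  · rw [hy.apply_last, hx.x0_apply_zero_last, hy0.inv.apply_cons_of_ne h0l.symm,
      hx.x0_apply_last, hE₁.inv.apply_cons_cons_cons_of_ne h0l.symm, hE₂.apply_cons_cons_cons,
      hx.x0_apply_zero_last]
  · rw [hy.apply_mid hb₁ hb₂, hx.x0_apply_zero_last, hy0.inv.apply_cons_of_ne h0l.symm,
      hx.x0_apply_mid hb₁ hb₂, hE₁.inv.apply_cons_cons_cons_of_ne (ne_zeroDigit_of_one_le hb₁),
      hE₂.apply_cons_cons_cons_of_ne (ne_lastDigit_of_le hb₂), hx.x0_apply_zero_last]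

lemma y0_conj_X00_apply_replicate (hx : IsXFamily n hn x) (hy : IsY n hn ycore)
    (hy0 : IsPrefixMap [𝟘] ycore y0) (hX00 : IsPrefixMap [𝟘] (x 𝟘) X00) (a : ℕ) (ζ : C n) :
    (y0 * X00 * y0⁻¹) (wcons (List.replicate (a + 2) 𝟘) ζ) =
      wcons (List.replicate (a + 1) 𝟘) (ycore (cons 𝟘 (ycore⁻¹ ζ))) := by
  change y0 (X00 (y0⁻¹ (cons 𝟘 (wcons (List.replicate (a + 1) 𝟘) ζ)))) =
    cons 𝟘 (wcons (List.replicate a 𝟘) (ycore (cons 𝟘 (ycore⁻¹ ζ))))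
  rw [hy0.inv.apply_cons, hy.inv_apply_replicate, hX00.apply_cons,
    show 2 * (a + 1) = 2 * a + 1 + 1 by ring]
  change y0 (cons 𝟘 (x 𝟘 (cons 𝟘 (cons 𝟘 (wcons (List.replicate (2 * a) 𝟘) (ycore⁻¹ ζ)))))) = _
  rw [hx.x0_apply_zero_le (k := 𝟘) (Nat.zero_le _), hy0.apply_cons, cons_wcons_replicate,
    hy.apply_replicate_two_mul]

theorem y0_conj_X00_not_mem_replicateShifts (hx : IsXFamily n hn x) (hy : IsY n hn ycore)
    (hy0 : IsPrefixMap [𝟘] ycore y0) (hX00 : IsPrefixMap [𝟘] (x 𝟘) X00) :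
    y0 * X00 * y0⁻¹ ∉ replicateShifts 𝟘 := by
  rintro ⟨A, B, hAB⟩
  have hshift (ζ : C n) : (y0 * X00 * y0⁻¹) (wcons (List.replicate (A + 2) 𝟘) ζ) =
      wcons (List.replicate (B + 2) 𝟘) ζ := by
    rw [wcons_replicate_add, hAB, ← wcons_replicate_add]
  have h := hshift (ycore (cons 𝕃 fun _ => 𝟘))
  rw [y0_conj_X00_apply_replicate hx hy hy0 hX00, inv_apply_apply, hy.apply_zero_last,
    hy.apply_last] at h
  exact wcons_replicate_cons_cons_ne (zeroDigit_ne_lastDigit hn) _ _ _ _ h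

theorem closure_le_replicateShifts (hx : IsXFamily n hn x) {y10 y1 core core' : Γ n}
    (hy10 : IsPrefixMap [𝕃, 𝟘] core y10) (hy1 : IsPrefixMap [𝕃] core' y1) :
    Subgroup.closure (Set.range x ∪ {y10, y1}) ≤ replicateShifts 𝟘 := by
  have h0l := zeroDigit_ne_lastDigit hn
  rw [Subgroup.closure_le]
  rintro g (⟨j, rfl⟩ | rfl | rfl)
  · exact hx.mem_replicateShifts j
  · exact mem_replicateShifts_of_apply_cons (hy10.apply_cons_of_ne h0l)
  · exact mem_replicateShifts_of_apply_cons (hy1.apply_cons_of_ne h0l)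

theorem y0_conj_x0_mem_closure (hx : IsXFamily n hn x) (hy : IsY n hn ycore)
    (hy0 : IsPrefixMap [𝟘] ycore y0) (hX00 : IsPrefixMap [𝟘] (x 𝟘) X00) {y10 : Γ n}
    (hy10 : IsPrefixMap [𝕃, 𝟘] ycore y10) :
    y0⁻¹ * x 𝟘 * y0 ∈ Subgroup.closure (Set.range x ∪ {y10}) := by
  set G := Subgroup.closure (Set.range x ∪ {y10})
  have hxG (i : Fin n) : x i ∈ G := Subgroup.subset_closure (Or.inl ⟨i, rfl⟩)
  have hconjG {c : Γ n} (hc : c ∈ G) : c⁻¹ * y10 * c ∈ G :=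
    mul_mem (mul_mem (inv_mem hc) (Subgroup.subset_closure (Or.inr rfl))) hc
  have hc₁ : x 𝕃 * x 𝟘 ∈ G := mul_mem (hxG _) (hxG _)
  have hc₂ : (x 𝟘)⁻¹ * x 𝕃 * x 𝟘 ∈ G := mul_mem (mul_mem (inv_mem (hxG _)) (hxG _)) (hxG _)
  rw [y0_conj_x0 hx hy hy0 hX00 (hy10.conj hx.xLast_mul_x0_apply_wcons)
    (hy10.conj hx.x0_conj_xLast_apply_wcons), eq_inv_mul_of_mul_eq (hx.x0_mul_x0 hX00).symm]
  exact mul_mem (mul_mem (mul_mem (hxG _) (hconjG hc₂)) (inv_mem (hconjG hc₁)))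
    (mul_mem (inv_mem hc₁) (mul_mem (hxG _) (hxG _)))

end LodhaMoore

theorem conjugate_mem_and_not_mem
    (n : ℕ) (hn : 2 ≤ n) (x : Fin n → Γ n) (hx : IsXFamily n hn x)
    (ycore : Γ n) (hy : IsY n hn ycore)
    (y10 : Γ n) (hy10 : IsPrefixMap [⟨n - 1, by omega⟩, ⟨0, by omega⟩] ycore y10)
    (y0 : Γ n) (hy0 : IsPrefixMap [⟨0, by omega⟩] ycore y0)
    (y1 : Γ n) (hy1 : IsPrefixMap [⟨n - 1, by omega⟩] ycore y1)
    (X00 : Γ n) (hX00 : IsPrefixMap [⟨0, by omega⟩] (x ⟨0, by omega⟩) X00)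
    (G0 : Subgroup (Γ n)) (hG0 : G0 = Subgroup.closure (Set.range x ∪ {y10}))
    (Gy : Subgroup (Γ n)) (hGy : Gy = Subgroup.closure (Set.range x ∪ {y10, y1})) :
    y0⁻¹ * x ⟨0, by omega⟩ * y0 ∈ G0 ∧ y0 * X00 * y0⁻¹ ∉ Gy := by
  subst hG0 hGy
  exact ⟨y0_conj_x0_mem_closure hx hy hy0 hX00 hy10, fun h =>
    y0_conj_X00_not_mem_replicateShifts hx hy hy0 hX00 (closure_le_replicateShifts hx hy10 hy1 h)⟩

end LM
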